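/- Let W be the sequence with W_0 = a, W_1 = b, W_k = p*W_{k-1} + q*W_{k-2}, working over ℚ with b ≠ 0 and W_1 ≠ W_{n+1}, n ≥ 3. Define g_n = W_1 - W_2*W_n/W_1 + Σ_{k=2}^{n-1} (W_{k+1} - W_2*W_k/W_1)*(q*(W_n - W_0)/(W_1 - W_{n+1}))^{n-k}. Then circ(W_1,...,W_n) is invertible if and only if g_n ≠ 0. -/

import Mathlib

/-!
Right multiplication by a unit upper triangular matrix performs the column operations
`C₁ ↦ C₁ - (W₂ / W₁) C₀` and `Cⱼ ↦ Cⱼ - p Cⱼ₋₁ - q Cⱼ₋₂` (`j ≥ 2`) on the circulant. The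
entries obey the recurrence except across the wrap-around, so afterwards the first row is
`(W₁, 0, …, 0)` and each column `j ≥ 2` is zero except for `x = W₁ - W_{n+1}` on the diagonal
and `-r x` just above it, where `r = q (W_n - W₀) / x`. What is left after expanding along the
first row is bidiagonal apart from an arbitrary first column `v`, with determinant
`x^(n-2) ∑ rⁱ vᵢ`; reading off `v` gives `det = W₁ x^(n-2) g_n`.
-/

open Matrix

theorem Fin.val_sub_eq_ite {n : ℕ} (a b : Fin n) :
    ((a - b : Fin n) : ℕ) = if b ≤ a then (a : ℕ) - b else n + a - b := by
  split_ifs with h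
  · exact Fin.coe_sub_iff_le.mpr h
  · exact Fin.coe_sub_iff_lt.mpr (not_le.mp h)

theorem Fin.val_sub_of_two_le {N : ℕ} {j : Fin (N + 2)} (hj : 2 ≤ (j : ℕ)) :
    ((j - 1 : Fin (N + 2)) : ℕ) = j - 1 ∧ ((j - 2 : Fin (N + 2)) : ℕ) = j - 2 := by
  have h2 : ((2 : Fin (N + 2)) : ℕ) = 2 :=
    Nat.mod_eq_of_lt (show 2 < N + 2 by have := j.is_lt; omega)
  simp only [Fin.val_sub_eq_ite, Fin.le_def, Fin.val_one, h2]
  constructor <;> split_ifs <;> omega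

section Bidiagonal

variable {R : Type*} [CommRing R]

def bidiagonalWithFirstCol {N : ℕ} (v : Fin N → R) (x y : R) : Matrix (Fin N) (Fin N) R :=
  of fun i j =>
    if (j : ℕ) = 0 then v i else if i = j then x else if (i : ℕ) + 1 = j then y else 0

theorem det_bidiagonalWithFirstCol (N : ℕ) (v : Fin (N + 1) → R) (x y : R) :
    (bidiagonalWithFirstCol v x y).det =
      ∑ i : Fin (N + 1), (-y) ^ (i : ℕ) * x ^ (N - i) * v i := by
  induction N with
  | zero => simp [det_unique, bidiagonalWithFirstCol]
  | succ N ih =>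
    have minor_zero : (bidiagonalWithFirstCol v x y).submatrix Fin.succ Fin.succ =
        bidiagonalWithFirstCol (fun i => if i = 0 then x else 0) x y := by
      ext i j
      simp only [bidiagonalWithFirstCol, submatrix_apply, of_apply, Fin.val_succ, Fin.ext_iff,
        Fin.val_zero, Nat.add_eq_zero_iff, one_ne_zero, and_false, if_false, add_left_inj]
      split_ifs <;> first | rfl | omega
    have minor_one : (bidiagonalWithFirstCol v x y).submatrix Fin.succ (Fin.succAbove 1) =
        bidiagonalWithFirstCol (v ∘ Fin.succ) x y := by
      ext i j
      cases j using Fin.cases with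
      | zero => simp [bidiagonalWithFirstCol]
      | succ j =>
        simp only [bidiagonalWithFirstCol, submatrix_apply, of_apply, ← Fin.succ_zero_eq_one,
          Fin.succ_succAbove_succ, Fin.succAbove_zero, Fin.val_succ, Fin.ext_iff,
          Nat.add_eq_zero_iff, one_ne_zero, and_false, if_false, add_left_inj]
    have entry_zero_zero : bidiagonalWithFirstCol v x y 0 0 = v 0 := by
      simp [bidiagonalWithFirstCol]
    have entry_zero_one : bidiagonalWithFirstCol v x y 0 1 = y := by
      simp [bidiagonalWithFirstCol]
    have entry_zero_succ_succ (j : Fin N) : bidiagonalWithFirstCol v x y 0 j.succ.succ = 0 := by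
      simp [bidiagonalWithFirstCol, (Fin.succ_ne_zero _).symm]
    rw [det_succ_row_zero, Fin.sum_univ_succ, Fin.sum_univ_succ, Fin.succAbove_zero, minor_zero,
      Fin.succ_zero_eq_one, minor_one, ih, ih, Fin.sum_univ_succ (n := N + 1)]
    simp only [entry_zero_zero, entry_zero_one, entry_zero_succ_succ, mul_zero, zero_mul,
      Finset.sum_const_zero, add_zero, mul_ite, Finset.sum_ite_eq', Finset.mem_univ, if_true,
      Fin.val_zero, Fin.val_one, Fin.val_succ, Function.comp_apply, Nat.add_sub_add_right,
      Nat.sub_zero, Finset.mul_sum]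
    congr 1
    · ring
    · exact Finset.sum_congr rfl fun i _ => by ring

theorem det_eq_mul_det_submatrix_succ_of_row_zero {N : ℕ}
    (A : Matrix (Fin (N + 1)) (Fin (N + 1)) R) (hA : ∀ j, j ≠ 0 → A 0 j = 0) :
    A.det = A 0 0 * (A.submatrix Fin.succ Fin.succ).det := by
  rw [det_succ_row_zero, Fin.sum_univ_succ]
  simp [hA _ (Fin.succ_ne_zero _)]

end Bidiagonal

section RecurrenceColumnOps

variable {R : Type*} [CommRing R] {N : ℕ}

def recurrenceColumnOps (c p q : R) : Matrix (Fin (N + 2)) (Fin (N + 2)) R :=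
  of fun k j => (if k = j then 1 else 0) - (if (j : ℕ) = 1 then if k = 0 then c else 0 else 0)
    - (if 2 ≤ (j : ℕ) then (if k = j - 1 then p else 0) + (if k = j - 2 then q else 0) else 0)

theorem mul_recurrenceColumnOps_apply (A : Matrix (Fin (N + 2)) (Fin (N + 2)) R) (c p q : R)
    (i j : Fin (N + 2)) :
    (A * recurrenceColumnOps c p q : Matrix (Fin (N + 2)) (Fin (N + 2)) R) i j =
      A i j - (if (j : ℕ) = 1 then c * A i 0 else 0)
      - (if 2 ≤ (j : ℕ) then p * A i (j - 1) + q * A i (j - 2) else 0) := by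
  simp only [mul_apply, recurrenceColumnOps, of_apply, mul_sub, mul_add, mul_ite, mul_one,
    mul_zero, Finset.sum_sub_distrib]
  split_ifs <;> simp [Finset.sum_add_distrib, mul_comm]

theorem det_recurrenceColumnOps (c p q : R) : (recurrenceColumnOps (N := N) c p q).det = 1 := by
  have on_and_below_diag (k j : Fin (N + 2)) (hjk : (j : ℕ) ≤ k) :
      recurrenceColumnOps c p q k j = if k = j then 1 else 0 := by
    have no_c : (if (j : ℕ) = 1 then if k = 0 then c else 0 else 0) = 0 := by
      split_ifs with hj hk
      · rw [hk, Fin.val_zero] at hjk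
        omega
      all_goals rfl
    have no_pq : (if 2 ≤ (j : ℕ) then (if k = j - 1 then p else 0) + (if k = j - 2 then q else 0)
        else 0) = 0 := by
      by_cases hj : 2 ≤ (j : ℕ)
      · obtain ⟨h1, h2⟩ := Fin.val_sub_of_two_le hj
        have hk1 : k ≠ j - 1 := fun h => by rw [h, h1] at hjk; omega
        have hk2 : k ≠ j - 2 := fun h => by rw [h, h2] at hjk; omega
        rw [if_pos hj, if_neg hk1, if_neg hk2, add_zero]
      · rw [if_neg hj]
    simp only [recurrenceColumnOps, of_apply, no_c, no_pq, sub_zero]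
  rw [det_of_isUpperTriangular]
  · exact Finset.prod_eq_one fun j _ => by rw [on_and_below_diag j j le_rfl, if_pos rfl]
  · intro k j (hjk : (j : ℕ) < k)
    rw [on_and_below_diag k j hjk.le, if_neg (Fin.ne_of_gt hjk)]

theorem det_transpose_circulant_of_recurrence (w : Fin (N + 2) → R) (c p q : R)
    (hc : w 1 = c * w 0)
    (hrec : ∀ k : Fin (N + 2), 2 ≤ (k : ℕ) → w k = p * w (k - 1) + q * w (k - 2)) :
    (circulant w)ᵀ.det = w 0 * ∑ i : Fin (N + 1),
      (p * w 0 + q * w (-1) - w 1) ^ (i : ℕ) * (w 0 - p * w (-1) - q * w (-2)) ^ (N - i) *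
        (w (-i.castSucc) - c * w (-i.succ)) := by
  set A := (circulant w)ᵀ * recurrenceColumnOps c p q
  have defect (k : Fin (N + 2)) : w k - p * w (k - 1) - q * w (k - 2) =
      if k = 0 then w 0 - p * w (-1) - q * w (-2)
      else if k = 1 then w 1 - p * w 0 - q * w (-1) else 0 := by
    split_ifs with h0 h1
    · simp [h0]
    · rw [h1, sub_self, show (1 : Fin (N + 2)) - 2 = -1 by open Fin.CommRing in ring]
    · rw [hrec k (by simp only [Fin.ext_iff, Fin.val_zero, Fin.val_one] at h0 h1; omega)]
      ring
  have entry_of_two_le (i j : Fin (N + 2)) (hj : 2 ≤ (j : ℕ)) :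
      A i j = w (j - i) - p * w (j - i - 1) - q * w (j - i - 2) := by
    simp only [A, mul_recurrenceColumnOps_apply, transpose_apply, circulant_apply,
      sub_right_comm _ _ i, if_pos hj, if_neg (show (j : ℕ) ≠ 1 by omega)]
    ring
  have row_zero (j : Fin (N + 2)) (hj : j ≠ 0) : A 0 j = 0 := by
    by_cases hj1 : (j : ℕ) = 1
    · have : j = 1 := Fin.ext (by rw [hj1, Fin.val_one])
      subst this
      rw [show A 0 1 = _ from mul_recurrenceColumnOps_apply _ c p q 0 1]
      simp [hc]
    · rw [entry_of_two_le 0 j (by rw [Ne, Fin.ext_iff, Fin.val_zero] at hj; omega), sub_zero,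
        defect, if_neg hj, if_neg (fun h => hj1 (by simp [h]))]
  have hdet : (circulant w)ᵀ.det = A.det := by
    rw [det_mul, det_recurrenceColumnOps, mul_one]
  have minor : A.submatrix Fin.succ Fin.succ = bidiagonalWithFirstCol
      (fun i => w (-i.castSucc) - c * w (-i.succ)) (w 0 - p * w (-1) - q * w (-2))
      (w 1 - p * w 0 - q * w (-1)) := by
    ext i j
    cases j using Fin.cases with
    | zero =>
      have : (1 : Fin (N + 2)) - i.succ = -i.castSucc := by
        rw [← Fin.coeSucc_eq_succ]; open Fin.CommRing in ring
      simp [A, mul_recurrenceColumnOps_apply, bidiagonalWithFirstCol, this]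
    | succ j =>
      rw [submatrix_apply, entry_of_two_le _ _ (by simp), defect]
      simp only [bidiagonalWithFirstCol, of_apply, Fin.ext_iff, Fin.val_sub_eq_ite, Fin.val_succ,
        Fin.val_zero, Fin.val_one, Fin.le_def, Nat.add_eq_zero_iff, one_ne_zero, and_false,
        if_false]
      split_ifs <;> first | rfl | omega
  have corner : A 0 0 = w 0 := by
    rw [show A 0 0 = _ from mul_recurrenceColumnOps_apply _ c p q 0 0]
    simp
  rw [hdet, det_eq_mul_det_submatrix_succ_of_row_zero A row_zero, minor,
    det_bidiagonalWithFirstCol, corner]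
  congr 1
  exact Finset.sum_congr rfl fun i _ => by ring

end RecurrenceColumnOps

section LinearRecurrence

variable {K : Type*} [Field K]

-- The paper's `g_n`, with the ratio `q (W n - W 0) / (W 1 - W (n + 1))` abstracted to `r`.
def circFactor (r : K) (W : ℕ → K) (n : ℕ) : K :=
  W 1 - W 2 * W n / W 1 +
    ∑ k ∈ Finset.Icc 2 (n - 1), (W (k + 1) - W 2 * W k / W 1) * r ^ (n - k)

theorem sum_fin_eq_circFactor (N : ℕ) (r : K) (W : ℕ → K) :
    ∑ i : Fin (N + 2), r ^ (i : ℕ) *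
      (W (((-i.castSucc : Fin (N + 3)) : ℕ) + 1) -
        W 2 / W 1 * W (((-i.succ : Fin (N + 3)) : ℕ) + 1)) =
      circFactor r W (N + 3) := by
  have neg_castSucc (i : Fin (N + 1)) : ((-i.succ.castSucc : Fin (N + 3)) : ℕ) = N + 2 - i := by
    rw [Fin.val_neg, if_neg (Fin.castSucc_ne_zero_iff.mpr (Fin.succ_ne_zero i)), Fin.val_castSucc,
      Fin.val_succ]
    omega
  have neg_succ (i : Fin (N + 1)) : ((-i.succ.succ : Fin (N + 3)) : ℕ) = N + 1 - i := by
    rw [Fin.val_neg, if_neg (Fin.succ_ne_zero _), Fin.val_succ, Fin.val_succ]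
    omega
  rw [Fin.sum_univ_succ]
  simp only [neg_castSucc, neg_succ, Fin.castSucc_zero, neg_zero, Fin.succ_zero_eq_one,
    Fin.coe_neg_one, Fin.val_zero, pow_zero, one_mul, Fin.val_succ,
    Fin.sum_univ_eq_sum_range
      (fun i => r ^ (i + 1) * (W (N + 2 - i + 1) - W 2 / W 1 * W (N + 1 - i + 1)))]
  rw [circFactor, div_mul_eq_mul_div, show N + 3 - 1 = N + 2 from rfl,
    ← Finset.Ico_add_one_right_eq_Icc]
  congr 1
  convert Finset.sum_Ico_reflect (fun k => (W (k + 1) - W 2 * W k / W 1) * r ^ (N + 3 - k)) 0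
    (show N + 1 ≤ N + 2 + 1 by omega) using 1
  · rw [Finset.range_eq_Ico]
    refine Finset.sum_congr rfl fun i hi => ?_
    rw [Finset.mem_Ico] at hi
    rw [show N + 1 - i + 1 = N + 2 - i by omega, show N + 3 - (N + 2 - i) = i + 1 by omega]
    ring
  · congr 2
    omega

theorem det_circ_of_linearRecurrence (n : ℕ) (hn : 3 ≤ n) (p q : K) (W : ℕ → K)
    (hrec : ∀ k, W (k + 2) = p * W (k + 1) + q * W k) (hW1 : W 1 ≠ 0) (hx : W 1 ≠ W (n + 1)) :
    (of fun i j : Fin n => W ((j - i : Fin n).val + 1)).det =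
      W 1 * (W 1 - W (n + 1)) ^ (n - 2) *
        circFactor (q * (W n - W 0) / (W 1 - W (n + 1))) W n := by
  obtain ⟨N, rfl⟩ : ∃ N, n = N + 3 := ⟨n - 3, by omega⟩
  set w : Fin (N + 3) → K := fun k => W (k + 1) with hw
  set x := W 1 - W (N + 3 + 1)
  set r := q * (W (N + 3) - W 0) / x
  have hwrec (k : Fin (N + 3)) (hk : 2 ≤ (k : ℕ)) : w k = p * w (k - 1) + q * w (k - 2) := by
    obtain ⟨h1, h2⟩ := Fin.val_sub_of_two_le (N := N + 1) hk
    simp only [hw, h1, h2]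
    rw [show (k : ℕ) + 1 = k - 2 + 1 + 2 by omega, hrec,
      show k - 2 + 1 + 1 = (k : ℕ) - 1 + 1 by omega]
  have neg_one : w (-1) = W (N + 3) := by
    simp only [hw, Fin.coe_neg_one]
  have neg_two : w (-2) = W (N + 2) := by
    simp only [hw]
    rw [Fin.val_neg, if_neg (by rw [Fin.ext_iff, Fin.val_two, Fin.val_zero]; omega), Fin.val_two]
    rfl
  have superdiag : p * w 0 + q * w (-1) - w 1 = r * x := by
    rw [neg_one, div_mul_cancel₀ _ (sub_ne_zero.mpr hx)]
    simp only [hw, Fin.val_zero, Fin.val_one, hrec 0]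
    ring
  have diag : w 0 - p * w (-1) - q * w (-2) = x := by
    rw [neg_one, neg_two]
    simp only [hw, Fin.val_zero, x, hrec (N + 2)]
    ring
  rw [show of (fun i j : Fin (N + 3) => W ((j - i : Fin (N + 3)).val + 1)) = (circulant w)ᵀ
      from rfl,
    det_transpose_circulant_of_recurrence w (W 2 / W 1) p q (div_mul_cancel₀ _ hW1).symm hwrec,
    superdiag, diag, ← sum_fin_eq_circFactor, show N + 3 - 2 = N + 1 from rfl, Finset.mul_sum,
    Finset.mul_sum]
  refine Finset.sum_congr rfl fun i _ => ?_
  rw [← pow_mul_pow_sub x (Nat.lt_succ_iff.mp i.is_lt)]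
  simp only [hw, Fin.val_zero, zero_add]
  ring_nf

end LinearRecurrence

theorem stmt16_general (n : ℕ) (hn : 3 ≤ n) (b p q : ℚ) (W : ℕ → ℚ)
    (hW1 : W 1 = b)
    (hrec : ∀ k, W (k + 2) = p * W (k + 1) + q * W k)
    (hb : b ≠ 0) (hne : W 1 ≠ W (n + 1)) :
    IsUnit (Matrix.of fun i j : Fin n => W ((j - i : Fin n).val + 1)) ↔
      (W 1 - W 2 * W n / W 1 +
        ∑ k ∈ Finset.Icc 2 (n - 1),
          (W (k + 1) - W 2 * W k / W 1) *
            (q * (W n - W 0) / (W 1 - W (n + 1))) ^ (n - k)) ≠ 0 := by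
  subst hW1
  rw [isUnit_iff_isUnit_det, isUnit_iff_ne_zero,
    det_circ_of_linearRecurrence n hn p q W hrec hb hne, mul_ne_zero_iff,
    and_iff_right (mul_ne_zero hb (pow_ne_zero _ (sub_ne_zero.mpr hne)))]
  rfl

theorem stmt16 (n : ℕ) (hn : 3 ≤ n) (a b p q : ℚ) (W : ℕ → ℚ)
    (hW0 : W 0 = a) (hW1 : W 1 = b)
    (hrec : ∀ k, W (k + 2) = p * W (k + 1) + q * W k)
    (hb : b ≠ 0) (hne : W 1 ≠ W (n + 1)) :
    IsUnit (Matrix.of fun i j : Fin n => W ((j - i : Fin n).val + 1)) ↔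
      (W 1 - W 2 * W n / W 1 +
        ∑ k ∈ Finset.Icc 2 (n - 1),
          (W (k + 1) - W 2 * W k / W 1) *
            (q * (W n - W 0) / (W 1 - W (n + 1))) ^ (n - k)) ≠ 0 :=
  stmt16_general n hn b p q W hW1 hrec hb hne
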